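/- Let α̂: (B̂,Ŷ) → (Â,X̂) be a rigid epimorphism of piles whose kernel is a finite group. Then there exist finite piles (B,Y) and (A,X), a rigid epimorphism α: (B,Y) → (A,X), and morphisms of piles p: (B̂,Ŷ) → (B,Y) and φ₀: (Â,X̂) → (A,X) such that α ∘ p = φ₀ ∘ α̂ and the resulting commutative square is cartesian, i.e. the induced morphism from (B̂,Ŷ) to the fiber product pile (B ×_A Â, Y ×_X X̂) is an isomorphism of piles. -/

import Mathlib

open Pointwise

/-- A pile `(G,T)`: a profinite group `G`, a profinite space `T`, and a continuous action
of `G` on `T`. -/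
structure Pile : Type 1 where
  G : Type
  T : Type
  [grp : Group G]
  [topG : TopologicalSpace G]
  [tgG : IsTopologicalGroup G]
  [cG : CompactSpace G]
  [h2G : T2Space G]
  [tdG : TotallyDisconnectedSpace G]
  [topT : TopologicalSpace T]
  [cT : CompactSpace T]
  [h2T : T2Space T]
  [tdT : TotallyDisconnectedSpace T]
  [act : MulAction G T]
  [csmul : ContinuousSMul G T]

attribute [instance] Pile.grp Pile.topG Pile.tgG Pile.cG Pile.h2G Pile.tdG
  Pile.topT Pile.cT Pile.h2T Pile.tdT Pile.act Pile.csmul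

/-- A pile is finite if both its group and its space are finite. -/
def Pile.IsFinite (P : Pile) : Prop := Finite P.G ∧ Finite P.T

/-- A morphism of piles: a continuous group homomorphism together with a continuous
equivariant map of the spaces. -/
structure PileHom (P Q : Pile) where
  toGrp : P.G →* Q.G
  contGrp : Continuous toGrp
  toSp : P.T → Q.T
  contSp : Continuous toSp
  equivariant : ∀ (g : P.G) (t : P.T), toSp (g • t) = toGrp g • toSp t

/-- Composition of pile morphisms. -/
def PileHom.comp {P Q R : Pile} (g : PileHom Q R) (f : PileHom P Q) : PileHom P R where
  toGrp := g.toGrp.comp f.toGrp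
  contGrp := g.contGrp.comp f.contGrp
  toSp := g.toSp ∘ f.toSp
  contSp := g.contSp.comp f.contSp
  equivariant := fun a t => by
    simp [Function.comp, f.equivariant, g.equivariant]

/-- A pile morphism is an epimorphism if it is surjective on groups and spaces and for
every point `x` of the target space there is a point `y` above it whose stabilizer maps
onto the stabilizer of `x`. -/
def PileHom.IsEpi {P Q : Pile} (f : PileHom P Q) : Prop :=
  Function.Surjective f.toGrp ∧ Function.Surjective f.toSp ∧
  ∀ x : Q.T, ∃ y : P.T, f.toSp y = x ∧
    (MulAction.stabilizer P.G y).map f.toGrp = MulAction.stabilizer Q.G x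

/-- The induced map of orbit spaces. -/
def PileHom.orbitMap {P Q : Pile} (f : PileHom P Q) :
    Quotient (MulAction.orbitRel P.G P.T) → Quotient (MulAction.orbitRel Q.G Q.T) :=
  Quotient.lift (fun t => Quotient.mk (MulAction.orbitRel Q.G Q.T) (f.toSp t))
    (fun t₁ t₂ h => Quotient.sound (by
      obtain ⟨g, hg⟩ := MulAction.mem_orbit_iff.mp h
      exact MulAction.mem_orbit_iff.mpr ⟨f.toGrp g, by rw [← hg, f.equivariant]⟩))

/-- A pile morphism is a rigid epimorphism if it is an epimorphism, maps each point
stabilizer isomorphically onto the stabilizer of the image point, and induces a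
homeomorphism of the orbit spaces. -/
def PileHom.IsRigid {P Q : Pile} (f : PileHom P Q) : Prop :=
  f.IsEpi ∧
  (∀ y : P.T, Set.InjOn f.toGrp (MulAction.stabilizer P.G y) ∧
    (MulAction.stabilizer P.G y).map f.toGrp = MulAction.stabilizer Q.G (f.toSp y)) ∧
  IsHomeomorph f.orbitMap

/-- The commutative square formed by `p : B̂ → B`, `α̂ : B̂ → Â`, `α : B → A`, `φ₀ : Â → A`
is cartesian: it commutes and `B̂` (both on groups and on spaces) maps bijectively onto the
fiber product `B ×_A Â` (resp. `Y ×_X X̂`). -/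
def IsCartesianSquare {Bhat B Ahat A : Pile} (p : PileHom Bhat B) (αhat : PileHom Bhat Ahat)
    (α : PileHom B A) (φ₀ : PileHom Ahat A) : Prop :=
  α.comp p = φ₀.comp αhat ∧
  Function.Injective (fun b : Bhat.G => (p.toGrp b, αhat.toGrp b)) ∧
  (∀ (b : B.G) (a : Ahat.G), α.toGrp b = φ₀.toGrp a →
    ∃ c : Bhat.G, p.toGrp c = b ∧ αhat.toGrp c = a) ∧
  Function.Injective (fun y : Bhat.T => (p.toSp y, αhat.toSp y)) ∧
  (∀ (y : B.T) (x : Ahat.T), α.toSp y = φ₀.toSp x →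
    ∃ z : Bhat.T, p.toSp z = y ∧ αhat.toSp z = x)


theorem discreteQuot {X : Type} [TopologicalSpace X] (S : Setoid X)
    (h : IsLocallyConstant (fun x => Quotient.mk S x)) : DiscreteTopology (Quotient S) := by
  rw [discreteTopology_iff_forall_isOpen]
  intro s
  refine (isQuotientMap_quot_mk (r := fun a b => S.r a b)).isOpen_preimage.1 ?_
  exact h s

theorem PileHom.ext' {P Q : Pile} {f g : PileHom P Q} (h1 : f.toGrp = g.toGrp)
    (h2 : f.toSp = g.toSp) : f = g := by
  cases f; cases g
  dsimp at h1 h2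
  subst h1; subst h2
  rfl

theorem exists_good_data (Γ T : Type) [Group Γ] [TopologicalSpace Γ] [IsTopologicalGroup Γ]
    [CompactSpace Γ] [T2Space Γ] [TotallyDisconnectedSpace Γ]
    [TopologicalSpace T] [CompactSpace T] [T2Space T] [TotallyDisconnectedSpace T]
    [MulAction Γ T] [ContinuousSMul Γ T]
    (K : Subgroup Γ) (hKfin : Finite K)
    (hfree : ∀ k ∈ K, ∀ y : T, k • y = y → k = 1) :
    ∃ (S : Setoid T) (N : Subgroup Γ), N.Normal ∧ IsOpen (N : Set Γ) ∧
      (∀ k ∈ K, k ∈ N → k = 1) ∧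
      Finite (Quotient S) ∧
      IsLocallyConstant (fun y : T => (⟦y⟧ : Quotient S)) ∧
      (∀ (g : Γ) (y y' : T), S.r y y' → S.r (g • y) (g • y')) ∧
      (∀ n ∈ N, ∀ y : T, S.r (n • y) y) ∧
      (∀ k ∈ K, ∀ y : T, S.r (k • y) y → k = 1) := by
  classical
  -- Step 1: an open normal subgroup meeting K trivially
  have hKsetfin : ((K : Set Γ) \ {1}).Finite := (Set.toFinite (K : Set Γ)).diff
  obtain ⟨V₀, hV₀clopen, h1V₀, hV₀sub⟩ :=
    compact_exists_isClopen_in_isOpen hKsetfin.isClosed.isOpen_compl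
      (by simp : (1 : Γ) ∈ ((K : Set Γ) \ {1})ᶜ)
  obtain ⟨N'', hN''sub⟩ :=
    IsTopologicalGroup.exist_openNormalSubgroup_sub_clopen_nhds_of_one hV₀clopen h1V₀
  have hN''K : ∀ k ∈ K, k ∈ N''.toSubgroup → k = 1 := by
    intro k hkK hkN
    by_contra hk1
    exact hV₀sub (hN''sub hkN) ⟨hkK, hk1⟩
  -- Step 2: small clopen neighborhoods
  have step2 : ∀ y : T, ∃ U : Set T, IsClopen U ∧ y ∈ U ∧
      ∀ k ∈ K, k ≠ 1 → ∀ z ∈ U, k • z ∉ U := by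
    intro y
    have hk : ∀ k : ((K : Set Γ) \ {1} : Set Γ), ∃ V : Set T,
        IsClopen V ∧ y ∈ V ∧ ∀ z ∈ V, (k : Γ) • z ∉ V := by
      rintro ⟨k, hkK, hk1⟩
      have hne : y ≠ k • y := fun h => hk1 (hfree k hkK y h.symm)
      obtain ⟨W, hWclopen, hyW, hWsub⟩ :=
        compact_exists_isClopen_in_isOpen (isOpen_compl_singleton (x := k • y))
          (by simpa using hne)
      refine ⟨W ∩ (fun z => k • z) ⁻¹' Wᶜ, ?_, ⟨hyW, fun hmem => (hWsub hmem) rfl⟩, ?_⟩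
      · exact hWclopen.inter (hWclopen.compl.preimage (continuous_const_smul k))
      · intro z hz hkz
        exact hz.2 hkz.1
    choose V hVclopen hyV hVmove using hk
    haveI : Finite ((K : Set Γ) \ {1} : Set Γ) := hKsetfin.to_subtype
    refine ⟨⋂ k, V k, isClopen_iInter_of_finite hVclopen, Set.mem_iInter.2 hyV, ?_⟩
    intro k hkK hk1 z hz hkz
    exact hVmove ⟨k, hkK, hk1⟩ z (Set.mem_iInter.1 hz _) (Set.mem_iInter.1 hkz _)
  choose U hUclopen hyU hUmove using step2
  obtain ⟨t, ht⟩ := IsCompact.elim_finite_subcover isCompact_univ U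
    (fun y => (hUclopen y).2) (fun z _ => Set.mem_iUnion.2 ⟨z, hyU z⟩)
  -- the coloring
  let c : T → Finset T := fun z => t.filter (fun y => z ∈ U y)
  have hcmem : ∀ z, ∀ y ∈ t, (y ∈ c z ↔ z ∈ U y) := by
    intro z y hy; simp [c, Finset.mem_filter, hy]
  have hc : IsLocallyConstant c := by
    rw [IsLocallyConstant.iff_exists_open]
    intro x
    refine ⟨⋂ y ∈ t, (if x ∈ U y then U y else (U y)ᶜ), ?_, ?_, ?_⟩
    · refine isOpen_biInter_finset (fun y _ => ?_)
      split
      · exact (hUclopen y).2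
      · exact (hUclopen y).compl.2
    · refine Set.mem_iInter₂.2 (fun y _ => ?_)
      split <;> simp_all
    · intro x' hx'
      have hiff : ∀ y ∈ t, (x' ∈ U y ↔ x ∈ U y) := by
        intro y hy
        have := Set.mem_iInter₂.1 hx' y hy
        split at this
        · simp_all
        · simp_all
      simp only [c]
      exact Finset.filter_congr (fun y hy => by rw [hiff y hy])
  have hckey : ∀ k ∈ K, ∀ z, c (k • z) = c z → k = 1 := by
    intro k hk z hcz
    by_contra hk1
    obtain ⟨y, hyt, hzy⟩ := Set.mem_iUnion₂.1 (ht (Set.mem_univ z))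
    have h1 : y ∈ c z := (hcmem z y hyt).2 hzy
    have h2 : y ∈ c (k • z) := hcz ▸ h1
    exact hUmove y k hk hk1 z hzy ((hcmem (k • z) y hyt).1 h2)
  -- Step 3: the invariant refinement F
  letI : TopologicalSpace (Finset T) := ⊥
  haveI : DiscreteTopology (Finset T) := ⟨rfl⟩
  let F : T → (Γ → Finset T) := fun z g => c (g • z)
  have hFlc : IsLocallyConstant F := by
    rw [IsLocallyConstant.iff_exists_open]
    intro x
    have hbox : ∀ g : Γ, ∃ (V : Set Γ) (W : Set T), IsOpen V ∧ IsOpen W ∧ g ∈ V ∧ x ∈ W ∧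
        ∀ g' ∈ V, ∀ z ∈ W, c (g' • z) = c (g • x) := by
      intro g
      have hopen : IsOpen {p : Γ × T | c (p.1 • p.2) = c (g • x)} := by
        have hcont : Continuous (fun p : Γ × T => c (p.1 • p.2)) :=
          hc.continuous.comp continuous_smul
        exact hcont.isOpen_preimage {c (g • x)} (isOpen_discrete _)
      rcases isOpen_prod_iff.1 hopen g x rfl with ⟨V, W, hV, hW, hgV, hxW, hsub⟩
      exact ⟨V, W, hV, hW, hgV, hxW, fun g' hg' z hz => hsub (Set.mk_mem_prod hg' hz)⟩
    choose V W hVopen hWopen hgV hxW hconst using hbox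
    obtain ⟨s, hs⟩ := IsCompact.elim_finite_subcover isCompact_univ V hVopen
      (fun g _ => Set.mem_iUnion.2 ⟨g, hgV g⟩)
    refine ⟨⋂ g ∈ s, W g, isOpen_biInter_finset (fun g _ => hWopen g),
      Set.mem_iInter₂.2 (fun g _ => hxW g), ?_⟩
    intro x' hx'
    funext g'
    obtain ⟨g₀, hg₀s, hg₀⟩ := Set.mem_iUnion₂.1 (hs (Set.mem_univ g'))
    have h1 := hconst g₀ g' hg₀ x' (Set.mem_iInter₂.1 hx' g₀ hg₀s)
    have h2 := hconst g₀ g' hg₀ x (hxW g₀)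
    exact h1.trans h2.symm
  let S : Setoid T := ⟨fun y y' => F y = F y', ⟨fun _ => rfl, Eq.symm, Eq.trans⟩⟩
  haveI : Finite ↥(Set.range F) := hFlc.range_finite.to_subtype
  haveI hfinQ : Finite (Quotient S) := by
    apply Finite.of_injective (β := ↥(Set.range F))
      (fun q => ⟨Quotient.lift F (fun _ _ h => h) q, by
        induction q using Quotient.inductionOn with
        | h y => exact ⟨y, rfl⟩⟩)
    intro q q'
    induction q using Quotient.inductionOn with
    | h y =>
      induction q' using Quotient.inductionOn with
      | h y' =>
        intro h
        exact Quotient.sound (congrArg Subtype.val h)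
  -- the subgroup H
  let H : Subgroup Γ :=
    { carrier := {g : Γ | ∀ z : T, F (g • z) = F z}
      one_mem' := fun z => by rw [one_smul]
      mul_mem' := fun {a b} ha hb z => by rw [mul_smul, ha, hb]
      inv_mem' := fun {a} ha z => by
        have := ha (a⁻¹ • z)
        rw [smul_inv_smul] at this
        exact this.symm }
  have hHopen : IsOpen (H : Set Γ) := by
    apply Subgroup.isOpen_of_mem_nhds
    have hF1 : IsLocallyConstant fun p : Γ × T => F (p.1 • p.2) :=
      hFlc.comp_continuous continuous_smul
    have hF2 : IsLocallyConstant fun p : Γ × T => F p.2 :=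
      hFlc.comp_continuous continuous_snd
    have hD : IsOpen {p : Γ × T | F (p.1 • p.2) = F p.2} := by
      have heq : {p : Γ × T | F (p.1 • p.2) = F p.2} =
          ⋃ v : Γ → Finset T, {p : Γ × T | F (p.1 • p.2) = v} ∩ {p : Γ × T | F p.2 = v} := by
        ext p
        simp only [Set.mem_setOf_eq, Set.mem_iUnion, Set.mem_inter_iff]
        exact ⟨fun h => ⟨F p.2, h, rfl⟩, fun ⟨v, h1, h2⟩ => h1.trans h2.symm⟩
      rw [heq]
      exact isOpen_iUnion fun v => (hF1.isOpen_fiber v).inter (hF2.isOpen_fiber v)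
    obtain ⟨V, W', hVopen, _, h1V, hW', hsub⟩ :=
      generalized_tube_lemma isCompact_singleton isCompact_univ hD
        (by
          rintro ⟨a, b⟩ ⟨ha, -⟩
          simp only [Set.mem_singleton_iff] at ha
          subst ha
          show F (1 • b) = F b
          rw [one_smul])
    have hVH : V ⊆ (H : Set Γ) := fun g hg z =>
      hsub (Set.mk_mem_prod hg (hW' (Set.mem_univ z)))
    exact Filter.mem_of_superset (hVopen.mem_nhds (h1V rfl)) hVH
  haveI : Finite (Γ ⧸ H) := H.quotient_finite_of_isOpen hHopen
  haveI : H.FiniteIndex := H.finiteIndex_of_finite_quotient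
  refine ⟨S, H.normalCore ⊓ N''.toSubgroup, inferInstance, ?_, ?_, hfinQ, ?_, ?_, ?_, ?_⟩
  · rw [Subgroup.coe_inf]
    exact IsOpen.inter
      (Subgroup.isOpen_of_isClosed_of_finiteIndex _
        (H.normalCore_isClosed (H.isClosed_of_isOpen hHopen)))
      N''.isOpen'
  · exact fun k hkK hkN => hN''K k hkK hkN.2
  · rw [IsLocallyConstant.iff_exists_open]
    intro x
    obtain ⟨Uo, hUo, hxUo, hconst⟩ := (IsLocallyConstant.iff_exists_open F).1 hFlc x
    exact ⟨Uo, hUo, hxUo, fun x' hx' => Quotient.sound (hconst x' hx')⟩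
  · intro g y y' h
    funext g'
    show c (g' • g • y) = c (g' • g • y')
    rw [← mul_smul, ← mul_smul]
    exact congrFun h (g' * g)
  · intro n hn y
    exact H.normalCore_le hn.1 y
  · intro k hkK y h
    have := congrFun h 1
    simp only [F, one_smul] at this
    exact hckey k hkK y this

/-- Let `α̂ : (B̂,Ŷ) → (Â,X̂)` be a rigid epimorphism of piles whose kernel is a finite
group. Then there exist finite piles `(B,Y)` and `(A,X)`, a rigid epimorphism
`α : (B,Y) → (A,X)`, and morphisms of piles `p : (B̂,Ŷ) → (B,Y)`, `φ₀ : (Â,X̂) → (A,X)`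
making a cartesian commutative square with `α̂`. -/
theorem exists_finite_cartesian_square
    (Bhat Ahat : Pile) (αhat : PileHom Bhat Ahat)
    (hrigid : αhat.IsRigid) (hfin : Finite αhat.toGrp.ker) :
    ∃ (B A : Pile), B.IsFinite ∧ A.IsFinite ∧
      ∃ (α : PileHom B A) (p : PileHom Bhat B) (φ₀ : PileHom Ahat A),
        α.IsRigid ∧ IsCartesianSquare p αhat α φ₀ := by
  classical
  obtain ⟨⟨hGsurj, hSsurj, hepi3⟩, hstab, hhomeo⟩ := hrigid
  set K := αhat.toGrp.ker with hKdef
  -- the kernel acts freely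
  have hfree : ∀ k ∈ K, ∀ y : Bhat.T, k • y = y → k = 1 := by
    intro k hk y hky
    have h1 : k ∈ (MulAction.stabilizer Bhat.G y : Set Bhat.G) := hky
    have h2 : (1 : Bhat.G) ∈ (MulAction.stabilizer Bhat.G y : Set Bhat.G) := one_smul Bhat.G y
    exact (hstab y).1 h1 h2 (by rw [map_one]; exact hk)
  -- fibers of the space map are kernel orbits
  have hfib : ∀ u v : Bhat.T, αhat.toSp u = αhat.toSp v → ∃ k ∈ K, k • u = v := by
    intro u v h
    have horb : (Quotient.mk (MulAction.orbitRel Bhat.G Bhat.T) u) =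
        Quotient.mk (MulAction.orbitRel Bhat.G Bhat.T) v := by
      apply hhomeo.bijective.injective
      show Quotient.mk (MulAction.orbitRel Ahat.G Ahat.T) (αhat.toSp u) =
        Quotient.mk (MulAction.orbitRel Ahat.G Ahat.T) (αhat.toSp v)
      rw [h]
    have hmem : u ∈ MulAction.orbit Bhat.G v := Quotient.exact horb
    obtain ⟨g, hg⟩ := MulAction.mem_orbit_iff.1 hmem
    have hgstab : αhat.toGrp g ∈ MulAction.stabilizer Ahat.G (αhat.toSp v) := by
      rw [MulAction.mem_stabilizer_iff, ← αhat.equivariant, hg, h]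
    rw [← (hstab v).2, Subgroup.mem_map] at hgstab
    obtain ⟨h', hh'stab, hh'⟩ := hgstab
    refine ⟨h' * g⁻¹, ?_, ?_⟩
    · show αhat.toGrp (h' * g⁻¹) = 1
      rw [map_mul, map_inv, hh']
      group
    · rw [mul_smul, ← hg, inv_smul_smul]
      exact hh'stab
  obtain ⟨S, N, hNnormal, hNopen, hNK, hfinQ, hlc, hinv, hNtriv, hKfreeS⟩ :=
    exists_good_data Bhat.G Bhat.T K hfin hfree
  haveI := hNnormal
  haveI : K.Normal := αhat.toGrp.normal_ker
  set M := N ⊔ K with hMdef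
  haveI : M.Normal := Subgroup.sup_normal N K
  have hNM : N ≤ M := le_sup_left
  have hKM : K ≤ M := le_sup_right
  have hMopen : IsOpen (M : Set Bhat.G) := Subgroup.isOpen_mono hNM hNopen
  haveI : Finite (Bhat.G ⧸ N) := N.quotient_finite_of_isOpen hNopen
  haveI : Finite (Bhat.G ⧸ M) := M.quotient_finite_of_isOpen hMopen
  have hMmem : ∀ m ∈ M, ∃ n ∈ N, ∃ k ∈ K, n * k = m := by
    intro m hm
    have hmm : (m : Bhat.G) ∈ (↑N * ↑K : Set Bhat.G) := by
      rw [← Subgroup.normal_mul]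
      exact hm
    obtain ⟨n, hn, k, hk, hnk⟩ := hmm
    exact ⟨n, hn, k, hk, hnk⟩
  -- the coarser setoid on the space
  let SX : Setoid Bhat.T :=
    ⟨fun y y' => ∃ k ∈ K, S.r (k • y) y',
     ⟨fun y => ⟨1, K.one_mem, by rw [one_smul]⟩,
      by
        rintro y y' ⟨k, hk, h⟩
        refine ⟨k⁻¹, K.inv_mem hk, ?_⟩
        have h2 := hinv k⁻¹ _ _ (S.iseqv.symm h)
        rwa [inv_smul_smul] at h2,
      by
        rintro y y' y'' ⟨k, hk, h1⟩ ⟨k', hk', h2⟩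
        refine ⟨k' * k, K.mul_mem hk' hk, ?_⟩
        rw [mul_smul]
        exact S.iseqv.trans (hinv k' _ _ h1) h2⟩⟩
  -- finiteness of the quotients
  haveI hfinX : Finite (Quotient SX) := by
    apply Finite.of_surjective
      (Quotient.lift (fun y => Quotient.mk SX y)
        (fun a b h => Quotient.sound ⟨1, K.one_mem, by rw [one_smul]; exact h⟩) :
        Quotient S → Quotient SX)
    intro q
    induction q using Quotient.inductionOn with
    | h y => exact ⟨Quotient.mk S y, rfl⟩
  -- group actions on the quotients
  let endY : Bhat.G →* Function.End (Quotient S) :=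
    { toFun := fun g => Quotient.map (fun y => g • y) (fun a b h => hinv g a b h)
      map_one' := by
        funext q
        induction q using Quotient.inductionOn with
        | h y =>
          show Quotient.mk S ((1 : Bhat.G) • y) = Quotient.mk S y
          rw [one_smul]
      map_mul' := fun a b => by
        funext q
        induction q using Quotient.inductionOn with
        | h y =>
          show Quotient.mk S ((a * b) • y) = Quotient.mk S (a • b • y)
          rw [mul_smul] }
  let ρY : (Bhat.G ⧸ N) →* Function.End (Quotient S) :=
    QuotientGroup.lift N endY (by
      intro n hn
      funext q
      induction q using Quotient.inductionOn with
      | h y =>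
        show Quotient.mk S (n • y) = Quotient.mk S y
        exact Quotient.sound (hNtriv n hn y))
  letI actY : MulAction (Bhat.G ⧸ N) (Quotient S) := MulAction.ofEndHom ρY
  let endX : Bhat.G →* Function.End (Quotient SX) :=
    { toFun := fun g => Quotient.map (fun y => g • y)
        (fun a b hab => by
          obtain ⟨k, hk, h⟩ := hab
          refine ⟨g * k * g⁻¹, Subgroup.Normal.conj_mem ‹K.Normal› k hk g, ?_⟩
          have hrw : (g * k * g⁻¹) • g • a = g • k • a := by
            rw [← mul_smul, ← mul_smul]
            congr 1
            group
          rw [hrw]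
          exact hinv g _ _ h)
      map_one' := by
        funext q
        induction q using Quotient.inductionOn with
        | h y =>
          show Quotient.mk SX ((1 : Bhat.G) • y) = Quotient.mk SX y
          rw [one_smul]
      map_mul' := fun a b => by
        funext q
        induction q using Quotient.inductionOn with
        | h y =>
          show Quotient.mk SX ((a * b) • y) = Quotient.mk SX (a • b • y)
          rw [mul_smul] }
  let ρX : (Bhat.G ⧸ M) →* Function.End (Quotient SX) :=
    QuotientGroup.lift M endX (by
      intro m hm
      obtain ⟨n, hn, k, hk, hnk⟩ := hMmem m hm
      funext q
      induction q using Quotient.inductionOn with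
      | h y =>
        show Quotient.mk SX (m • y) = Quotient.mk SX y
        refine Quotient.sound ⟨k⁻¹, K.inv_mem hk, ?_⟩
        have hrw : k⁻¹ • m • y = (k⁻¹ * n * k) • y := by
          rw [← mul_smul, ← hnk]
          congr 1
          group
        rw [hrw]
        exact hNtriv _ (Subgroup.Normal.conj_mem' ‹N.Normal› n hn k) y)
  letI actX : MulAction (Bhat.G ⧸ M) (Quotient SX) := MulAction.ofEndHom ρX
  have hsmulY : ∀ (g : Bhat.G) (y : Bhat.T),
      (QuotientGroup.mk g : Bhat.G ⧸ N) • (Quotient.mk S y) = Quotient.mk S (g • y) :=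
    fun _ _ => rfl
  have hsmulX : ∀ (g : Bhat.G) (y : Bhat.T),
      (QuotientGroup.mk g : Bhat.G ⧸ M) • (Quotient.mk SX y) = Quotient.mk SX (g • y) :=
    fun _ _ => rfl
  -- continuity of the canonical projections
  have hmkNlc : IsLocallyConstant (fun g : Bhat.G => (QuotientGroup.mk g : Bhat.G ⧸ N)) := by
    rw [IsLocallyConstant.iff_exists_open]
    intro b
    refine ⟨(fun x => b⁻¹ * x) ⁻¹' (N : Set Bhat.G),
      hNopen.preimage (continuous_const.mul continuous_id), by simpa using N.one_mem, ?_⟩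
    intro x hx
    rw [QuotientGroup.eq]
    simpa using N.inv_mem hx
  have hmkMlc : IsLocallyConstant (fun g : Bhat.G => (QuotientGroup.mk g : Bhat.G ⧸ M)) := by
    rw [IsLocallyConstant.iff_exists_open]
    intro b
    refine ⟨(fun x => b⁻¹ * x) ⁻¹' (M : Set Bhat.G),
      hMopen.preimage (continuous_const.mul continuous_id), by simpa using M.one_mem, ?_⟩
    intro x hx
    rw [QuotientGroup.eq]
    simpa using M.inv_mem hx
  have hlcX : IsLocallyConstant (fun y : Bhat.T => Quotient.mk SX y) := by
    rw [IsLocallyConstant.iff_exists_open]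
    intro x
    refine ⟨⋃ k : K, (fun z => (k : Bhat.G) • z) ⁻¹' {z | Quotient.mk S z = Quotient.mk S x},
      isOpen_iUnion fun k => (hlc.isOpen_fiber _).preimage (continuous_const_smul _), ?_, ?_⟩
    · refine Set.mem_iUnion.2 ⟨⟨1, K.one_mem⟩, ?_⟩
      show Quotient.mk S ((1 : Bhat.G) • x) = Quotient.mk S x
      rw [one_smul]
    · intro x' hx'
      obtain ⟨k, hk⟩ := Set.mem_iUnion.1 hx'
      exact Quotient.sound ⟨k, k.2, Quotient.exact hk⟩
  -- the two finite piles
  haveI hdBG : DiscreteTopology (Bhat.G ⧸ N) := discreteQuot _ hmkNlc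
  haveI hdAG : DiscreteTopology (Bhat.G ⧸ M) := discreteQuot _ hmkMlc
  haveI hdY : DiscreteTopology (Quotient S) := discreteQuot _ hlc
  haveI hdX : DiscreteTopology (Quotient SX) := discreteQuot _ hlcX
  haveI : ContinuousSMul (Bhat.G ⧸ N) (Quotient S) := ⟨continuous_of_discreteTopology⟩
  haveI : ContinuousSMul (Bhat.G ⧸ M) (Quotient SX) := ⟨continuous_of_discreteTopology⟩
  let PB : Pile := { G := Bhat.G ⧸ N, T := Quotient S }
  let PA : Pile := { G := Bhat.G ⧸ M, T := Quotient SX }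
  haveI : DiscreteTopology PB.G := hdBG
  haveI : DiscreteTopology PB.T := hdY
  haveI : DiscreteTopology PA.G := hdAG
  haveI : DiscreteTopology PA.T := hdX
  -- the three morphisms
  let p : PileHom Bhat PB :=
    { toGrp := QuotientGroup.mk' N
      contGrp := continuous_quot_mk
      toSp := fun y => Quotient.mk S y
      contSp := continuous_quot_mk
      equivariant := fun g t => (hsmulY g t).symm }
  let α : PileHom PB PA :=
    { toGrp := QuotientGroup.map N M (MonoidHom.id _) (by simpa using hNM)
      contGrp := continuous_of_discreteTopology
      toSp := Quotient.lift (fun y => Quotient.mk SX y)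
        (fun a b h => Quotient.sound ⟨1, K.one_mem, by rw [one_smul]; exact h⟩)
      contSp := continuous_of_discreteTopology
      equivariant := fun b q => by
        induction b using QuotientGroup.induction_on with
        | H g =>
          induction q using Quotient.inductionOn with
          | h y => rfl }
  -- φ₀ : the induced morphism out of Ahat
  have welldefG : ∀ u v : Bhat.G, αhat.toGrp u = αhat.toGrp v →
      (QuotientGroup.mk u : Bhat.G ⧸ M) = QuotientGroup.mk v := by
    intro u v h
    rw [QuotientGroup.eq]
    apply hKM
    show αhat.toGrp (u⁻¹ * v) = 1
    rw [map_mul, map_inv, h]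
    group
  let secG := Function.surjInv hGsurj
  have hsecG : ∀ a, αhat.toGrp (secG a) = a := Function.surjInv_eq hGsurj
  have keyG : ∀ b : Bhat.G,
      (QuotientGroup.mk (secG (αhat.toGrp b)) : Bhat.G ⧸ M) = QuotientGroup.mk b :=
    fun b => welldefG _ _ (hsecG _)
  have welldefX : ∀ u v : Bhat.T, αhat.toSp u = αhat.toSp v →
      Quotient.mk SX u = Quotient.mk SX v := by
    intro u v h
    obtain ⟨k, hk, hkuv⟩ := hfib u v h
    refine Quotient.sound ⟨k, hk, ?_⟩
    rw [hkuv]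
  let secT := Function.surjInv hSsurj
  have hsecT : ∀ x, αhat.toSp (secT x) = x := Function.surjInv_eq hSsurj
  have keyX : ∀ y : Bhat.T, Quotient.mk SX (secT (αhat.toSp y)) = Quotient.mk SX y :=
    fun y => welldefX _ _ (hsecT _)
  have hqG := Topology.IsQuotientMap.of_surjective_continuous hGsurj αhat.contGrp
  have hqS := Topology.IsQuotientMap.of_surjective_continuous hSsurj αhat.contSp
  let φG : Ahat.G →* Bhat.G ⧸ M :=
    { toFun := fun a => QuotientGroup.mk (secG a)
      map_one' := by
        have h1 := keyG 1
        rw [map_one] at h1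
        simpa using h1
      map_mul' := fun a b => by
        have h : αhat.toGrp (secG a * secG b) = a * b := by rw [map_mul, hsecG, hsecG]
        calc (QuotientGroup.mk (secG (a * b)) : Bhat.G ⧸ M)
            = QuotientGroup.mk (secG a * secG b) := welldefG _ _ (by rw [hsecG, h])
          _ = QuotientGroup.mk (secG a) * QuotientGroup.mk (secG b) := rfl }
  let φ₀ : PileHom Ahat PA :=
    { toGrp := φG
      contGrp := by
        rw [hqG.continuous_iff]
        have heq : (⇑φG ∘ ⇑αhat.toGrp) = fun b => (QuotientGroup.mk b : Bhat.G ⧸ M) :=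
          funext keyG
        rw [heq]
        exact hmkMlc.continuous
      toSp := fun x => Quotient.mk SX (secT x)
      contSp := by
        rw [hqS.continuous_iff]
        have heq : ((fun x => Quotient.mk SX (secT x)) ∘ αhat.toSp) =
            fun y => Quotient.mk SX y := funext keyX
        rw [heq]
        exact hlcX.continuous
      equivariant := by
        intro a x
        obtain ⟨g, rfl⟩ := hGsurj a
        obtain ⟨y, rfl⟩ := hSsurj x
        show Quotient.mk SX (secT (αhat.toGrp g • αhat.toSp y)) =
          φG (αhat.toGrp g) • Quotient.mk SX (secT (αhat.toSp y))
        rw [← αhat.equivariant, keyX (g • y), keyX y]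
        show Quotient.mk SX (g • y) =
          (QuotientGroup.mk (secG (αhat.toGrp g)) : Bhat.G ⧸ M) • Quotient.mk SX y
        rw [keyG g]
        exact (hsmulX g y).symm }
  refine ⟨PB, PA, ⟨‹Finite (Bhat.G ⧸ N)›, hfinQ⟩, ⟨‹Finite (Bhat.G ⧸ M)›, hfinX⟩,
    α, p, φ₀, ?_, ?_⟩
  · -- rigidity of α
    have hstabα : ∀ q : PB.T, Set.InjOn α.toGrp (MulAction.stabilizer PB.G q) ∧
        (MulAction.stabilizer PB.G q).map α.toGrp = MulAction.stabilizer PA.G (α.toSp q) := by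
      intro q
      induction q using Quotient.inductionOn with
      | h yh =>
        constructor
        · -- injectivity on the stabilizer
          intro b₁ hb₁ b₂ hb₂ hab
          induction b₁ using QuotientGroup.induction_on with
          | H g₁ =>
            induction b₂ using QuotientGroup.induction_on with
            | H g₂ =>
              have hab' : (QuotientGroup.mk g₁ : Bhat.G ⧸ M) = QuotientGroup.mk g₂ := hab
              have hM12 : g₁⁻¹ * g₂ ∈ M := (QuotientGroup.eq).1 hab'
              obtain ⟨n, hn, k, hk, hnk⟩ := hMmem _ hM12
              have hg₂ : g₂ = g₁ * (n * k) := by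
                rw [hnk]
                group
              have hs₁ : S.r (g₁ • yh) yh :=
                Quotient.exact (show Quotient.mk S (g₁ • yh) = Quotient.mk S yh from hb₁)
              have hs₂ : S.r (g₂ • yh) yh :=
                Quotient.exact (show Quotient.mk S (g₂ • yh) = Quotient.mk S yh from hb₂)
              have hs₃ : S.r ((n * k) • yh) yh := by
                have h1 : S.r (g₁ • (n * k) • yh) (g₁ • yh) := by
                  have hswap : g₁ • (n * k) • yh = g₂ • yh := by rw [← mul_smul, ← hg₂]
                  rw [hswap]
                  exact S.iseqv.trans hs₂ (S.iseqv.symm hs₁)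
                have h2 := hinv g₁⁻¹ _ _ h1
                rwa [inv_smul_smul, inv_smul_smul] at h2
              have hs₄ : S.r (k • yh) yh := by
                have h5 : S.r (n • k • yh) (k • yh) := hNtriv n hn (k • yh)
                have h6 : S.r (n • k • yh) yh := by
                  rw [← mul_smul]
                  exact hs₃
                exact S.iseqv.trans (S.iseqv.symm h5) h6
              have hk1 : k = 1 := hKfreeS k hk yh hs₄
              rw [hk1, mul_one] at hnk
              show (QuotientGroup.mk g₁ : Bhat.G ⧸ N) = QuotientGroup.mk g₂
              rw [QuotientGroup.eq, ← hnk]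
              exact hn
        · -- stabilizer maps onto stabilizer
          apply le_antisymm
          · intro a ha
            rw [Subgroup.mem_map] at ha
            obtain ⟨b, hb, rfl⟩ := ha
            rw [MulAction.mem_stabilizer_iff] at hb ⊢
            rw [← α.equivariant, hb]
          · intro a ha
            rw [Subgroup.mem_map]
            induction a using QuotientGroup.induction_on with
            | H g =>
              have hgy : SX.r (g • yh) yh :=
                Quotient.exact (show Quotient.mk SX (g • yh) = Quotient.mk SX yh from ha)
              obtain ⟨k, hk, hkg⟩ := hgy
              refine ⟨QuotientGroup.mk (k * g), ?_, ?_⟩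
              · show (QuotientGroup.mk (k * g) : Bhat.G ⧸ N) • Quotient.mk S yh =
                  Quotient.mk S yh
                rw [hsmulY]
                refine Quotient.sound ?_
                rw [mul_smul]
                exact hkg
              · show (QuotientGroup.mk (k * g) : Bhat.G ⧸ M) = QuotientGroup.mk g
                rw [QuotientGroup.eq]
                have hrw : (k * g)⁻¹ * g = g⁻¹ * k⁻¹ * g := by group
                rw [hrw]
                exact hKM (Subgroup.Normal.conj_mem' ‹K.Normal› _ (K.inv_mem hk) g)
    have hsurjαG : Function.Surjective α.toGrp := by
      intro a
      induction a using QuotientGroup.induction_on with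
      | H g => exact ⟨QuotientGroup.mk g, rfl⟩
    have hsurjαS : Function.Surjective α.toSp := by
      intro x
      induction x using Quotient.inductionOn with
      | h y => exact ⟨Quotient.mk S y, rfl⟩
    refine ⟨⟨hsurjαG, hsurjαS, ?_⟩, hstabα, ?_⟩
    · intro x
      obtain ⟨q, rfl⟩ := hsurjαS x
      exact ⟨q, rfl, (hstabα q).2⟩
    · -- orbit map is a homeomorphism
      haveI : Finite (Quotient (MulAction.orbitRel PB.G PB.T)) := Quotient.finite _
      haveI hdYo : DiscreteTopology (Quotient (MulAction.orbitRel PB.G PB.T)) :=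
        discreteQuot _ (IsLocallyConstant.of_discrete _)
      haveI hdXo : DiscreteTopology (Quotient (MulAction.orbitRel PA.G PA.T)) :=
        discreteQuot _ (IsLocallyConstant.of_discrete _)
      rw [isHomeomorph_iff_continuous_bijective]
      refine ⟨continuous_of_discreteTopology, ?_, ?_⟩
      · -- injective
        intro q q' hqq
        induction q using Quotient.inductionOn with
        | h y =>
          induction q' using Quotient.inductionOn with
          | h y' =>
            induction y using Quotient.inductionOn with
            | h yh =>
              induction y' using Quotient.inductionOn with
              | h yh' =>
                have hmem : (Quotient.mk SX yh) ∈
                    MulAction.orbit PA.G (Quotient.mk SX yh') := Quotient.exact hqq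
                obtain ⟨a, haa⟩ := MulAction.mem_orbit_iff.1 hmem
                induction a using QuotientGroup.induction_on with
                | H g =>
                  have haa' : Quotient.mk SX (g • yh') = Quotient.mk SX yh :=
                    (hsmulX g yh').symm.trans haa
                  have hgy : SX.r (g • yh') yh := Quotient.exact haa'
                  obtain ⟨k, hk, hkg⟩ := hgy
                  refine Quotient.sound (MulAction.mem_orbit_iff.2
                    ⟨QuotientGroup.mk (k * g), ?_⟩)
                  show (QuotientGroup.mk (k * g) : Bhat.G ⧸ N) • Quotient.mk S yh' =
                    Quotient.mk S yh
                  rw [hsmulY]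
                  refine Quotient.sound ?_
                  rw [mul_smul]
                  exact hkg
      · -- surjective
        intro x
        induction x using Quotient.inductionOn with
        | h x =>
          obtain ⟨q, rfl⟩ := hsurjαS x
          exact ⟨Quotient.mk _ q, rfl⟩
  · -- the cartesian square
    refine ⟨?_, ?_, ?_, ?_, ?_⟩
    · -- commutativity
      apply PileHom.ext'
      · ext g
        show (QuotientGroup.mk g : Bhat.G ⧸ M) = QuotientGroup.mk (secG (αhat.toGrp g))
        exact (keyG g).symm
      · funext y
        show Quotient.mk SX y = Quotient.mk SX (secT (αhat.toSp y))
        exact (keyX y).symm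
    · -- injectivity on groups
      intro g g' h
      simp only [Prod.mk.injEq] at h
      obtain ⟨h1, h2⟩ := h
      have h1' : (QuotientGroup.mk g : Bhat.G ⧸ N) = QuotientGroup.mk g' := h1
      have hN' : g⁻¹ * g' ∈ N := (QuotientGroup.eq).1 h1'
      have hK' : g⁻¹ * g' ∈ K := by
        show αhat.toGrp (g⁻¹ * g') = 1
        rw [map_mul, map_inv, h2]
        group
      have hone : g⁻¹ * g' = 1 := hNK _ hK' hN'
      calc g = g * (g⁻¹ * g') := by rw [hone]; group
        _ = g' := by group
    · -- surjectivity onto the group fiber product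
      intro b a hba
      induction b using QuotientGroup.induction_on with
      | H g =>
        obtain ⟨u, rfl⟩ := hGsurj a
        have hba' : (QuotientGroup.mk g : Bhat.G ⧸ M) = QuotientGroup.mk u :=
          hba.trans (keyG u)
        have hM' : g⁻¹ * u ∈ M := (QuotientGroup.eq).1 hba'
        obtain ⟨n, hn, k, hk, hnk⟩ := hMmem _ hM'
        refine ⟨g * n, ?_, ?_⟩
        · show (QuotientGroup.mk (g * n) : Bhat.G ⧸ N) = QuotientGroup.mk g
          rw [QuotientGroup.eq]
          have hrw : (g * n)⁻¹ * g = n⁻¹ := by group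
          rw [hrw]
          exact N.inv_mem hn
        · show αhat.toGrp (g * n) = αhat.toGrp u
          have hu : g * n = u * k⁻¹ := by
            have hu' : u = g * (n * k) := by
              rw [hnk]
              group
            rw [hu']
            group
          rw [hu, map_mul, map_inv]
          have hk1 : αhat.toGrp k = 1 := hk
          rw [hk1]
          group
    · -- injectivity on spaces
      intro y y' h
      simp only [Prod.mk.injEq] at h
      obtain ⟨h1, h2⟩ := h
      have h1' : Quotient.mk S y = Quotient.mk S y' := h1
      have hS' : S.r y y' := Quotient.exact h1'
      obtain ⟨k, hk, hky⟩ := hfib y y' h2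
      have hkr : S.r (k • y) y := by
        rw [hky]
        exact S.iseqv.symm hS'
      have hk1 : k = 1 := hKfreeS k hk y hkr
      rw [← hky, hk1, one_smul]
    · -- surjectivity onto the space fiber product
      intro q x hq
      induction q using Quotient.inductionOn with
      | h yh =>
        obtain ⟨y0, rfl⟩ := hSsurj x
        have hXeq : Quotient.mk SX yh = Quotient.mk SX y0 := hq.trans (keyX y0)
        have hrel : SX.r y0 yh := SX.iseqv.symm (Quotient.exact hXeq)
        obtain ⟨k, hk, hkyh⟩ := hrel
        refine ⟨k • y0, Quotient.sound hkyh, ?_⟩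
        rw [αhat.equivariant]
        have hk1 : αhat.toGrp k = 1 := hk
        rw [hk1, one_smul]
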